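/- arXiv:1311.6342 — 3 statements merged into one kernel-verified Lean document; each statement's English description precedes it below -/
import Mathlib

section
/- Let G be a non-abelian group. The commuting graph of G contains no 3-cycle (triangle) if and only if G is isomorphic to the symmetric group S₃, the quaternion group Q₈, or the dihedral group D₈ of order 8. -/
def commGraph (G : Type*) [Group G] : SimpleGraph G where
  Adj x y := x ≠ y ∧ x ∉ Subgroup.center G ∧ y ∉ Subgroup.center G ∧ x * y = y * x
  symm := by
    constructor
    rintro x y ⟨h1, h2, h3, h4⟩
    exact ⟨h1.symm, h3, h2, h4.symm⟩
  loopless := by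
    constructor
    rintro x ⟨h1, -⟩
    exact h1 rfl

/-!
In a group whose commuting graph has no triangle, two distinct commuting non-central elements
have central product (otherwise `x, y, x * y` is a triangle), and the centre has at most two
elements (otherwise `a, a * z, a * w` is a triangle for a non-central `a`).

If the centre is trivial, the centralizer of every `x ≠ 1` lies in `{1, x, x⁻¹}`. So every element
has order 1, 2 or 3, an involution `s` inverts every element of order 3, the elements of order 3
therefore commute with each other and form `{a, a⁻¹}`, and `G = ⟨a⟩ ∪ s⟨a⟩` is dihedral of
order 6.

If the centre is `{1, z}`, applying the first fact to `g` and `g * z` shows that every square is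
central, so all commutators of non-commuting elements equal `z`, and the centralizer of a
non-central `u` is `Z ∪ uZ`. Hence `G` is covered by `Z, xZ, yZ, yxZ` for any non-commuting
`x, y`; choosing `x ^ 2 = z` gives `y x y⁻¹ = x⁻¹` and `y ^ 2 ∈ {1, x ^ 2}`, i.e. `G` is `D₈` or
`Q₈`.

Conversely, `S₃`, `Q₈` and `D₈` are checked by computation.
-/

open Subgroup
open scoped commutatorElement

section Group

variable {G : Type*} [Group G] {a b s x : G}

theorem eq_one_of_sq_eq_one_of_pow_three_eq_one (h2 : x ^ 2 = 1) (h3 : x ^ 3 = 1) : x = 1 := by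
  rwa [pow_succ, h2, one_mul] at h3

theorem inv_eq_of_sq_eq_one (h : x ^ 2 = 1) : x⁻¹ = x :=
  inv_eq_of_mul_eq_one_right (by rw [← pow_two, h])

theorem commute_of_sq_eq_one (ha : a ^ 2 = 1) (hb : b ^ 2 = 1) (hab : (a * b) ^ 2 = 1) :
    Commute a b :=
  calc a * b = (a * b)⁻¹ := (inv_eq_of_sq_eq_one hab).symm
    _ = b * a := by rw [mul_inv_rev, inv_eq_of_sq_eq_one ha, inv_eq_of_sq_eq_one hb]

theorem commute_of_conj_eq_inv {u v : G} (hu : s * u * s⁻¹ = u⁻¹) (hv : s * v * s⁻¹ = v⁻¹)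
    (huv : s * (u * v) * s⁻¹ = (u * v)⁻¹) : Commute u v := by
  have : (u * v)⁻¹ = (v * u)⁻¹ := by
    rw [← huv, mul_inv_rev, ← hu, ← hv]
    group
  exact inv_injective this

theorem commutatorElement_mem_center (hsq : ∀ g : G, g ^ 2 ∈ center G) (x y : G) :
    ⁅x, y⁆ ∈ center G := by
  have : ⁅x, y⁆ = (x * y) ^ 2 * (y⁻¹ * (x ^ 2)⁻¹ * y⁻¹⁻¹) * (y ^ 2)⁻¹ := by
    simp only [commutatorElement_def, pow_two]
    group
  rw [this]
  exact mul_mem (mul_mem (hsq _) (Normal.conj_mem inferInstance _ (inv_mem (hsq x)) _))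
    (inv_mem (hsq y))

end Group

section Lift

variable {G : Type*} [Group G] {n : ℕ} {x y : G}

theorem pow_val_add [NeZero n] (hx : x ^ n = 1) (i j : ZMod n) :
    x ^ (i + j).val = x ^ i.val * x ^ j.val := by
  rw [ZMod.val_add, ← pow_add, ← pow_eq_pow_mod _ hx]

theorem pow_val_sub [NeZero n] (hx : x ^ n = 1) (i j : ZMod n) :
    x ^ (j - i).val = (x ^ i.val)⁻¹ * x ^ j.val := by
  rw [eq_inv_mul_iff_mul_eq, ← pow_val_add hx, add_sub_cancel]

theorem pow_val_eq_one_iff [NeZero n] (hx : orderOf x = n) (i : ZMod n) :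
    x ^ i.val = 1 ↔ i = 0 := by
  rw [← orderOf_dvd_iff_pow_eq_one, hx, ← ZMod.natCast_eq_zero_iff, ZMod.natCast_zmod_val]

theorem pow_val_natCast [NeZero n] (hx : x ^ n = 1) (k : ℕ) : x ^ (k : ZMod n).val = x ^ k := by
  rw [ZMod.val_natCast, ← pow_eq_pow_mod _ hx]

theorem pow_mul_eq_mul_inv_pow (hyx : y * x * y⁻¹ = x⁻¹) (k : ℕ) : x ^ k * y = y * (x ^ k)⁻¹ := by
  have hconj : y * x ^ k * y⁻¹ = (x ^ k)⁻¹ := by rw [← conj_pow, hyx, inv_pow]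
  calc x ^ k * y = x ^ k * ((y * x ^ k * y⁻¹) * y * (x ^ k)⁻¹) := by group
    _ = y * (x ^ k)⁻¹ := by rw [hconj]; group

theorem mul_pow_val_mul_mul_pow_val [NeZero n] (hx : x ^ n = 1) (hyx : y * x * y⁻¹ = x⁻¹)
    (i j : ZMod n) : y * x ^ i.val * (y * x ^ j.val) = y ^ 2 * x ^ (j - i).val := by
  rw [pow_two, pow_val_sub hx, mul_assoc y, ← mul_assoc _ y, pow_mul_eq_mul_inv_pow hyx]
  group

variable [NeZero n]

def dihedralLift (hx : x ^ n = 1) (hy : y ^ 2 = 1) (hyx : y * x * y⁻¹ = x⁻¹) :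
    DihedralGroup n →* G :=
  MonoidHom.mk'
    (fun
      | .r i => x ^ i.val
      | .sr i => y * x ^ i.val)
    (by
      rintro (i | i) (j | j)
      · exact pow_val_add hx i j
      · show y * x ^ (j - i).val = x ^ i.val * (y * x ^ j.val)
        rw [pow_val_sub hx, ← mul_assoc, ← mul_assoc, pow_mul_eq_mul_inv_pow hyx]
      · show y * x ^ (i + j).val = y * x ^ i.val * x ^ j.val
        rw [pow_val_add hx, mul_assoc]
      · show x ^ (j - i).val = y * x ^ i.val * (y * x ^ j.val)
        rw [mul_pow_val_mul_mul_pow_val hx hyx, hy, one_mul])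

theorem dihedralLift_injective (hx : orderOf x = n) (hy : y ^ 2 = 1) (hyx : y * x * y⁻¹ = x⁻¹)
    (hxy : ¬Commute x y) :
    Function.Injective (dihedralLift (hx ▸ pow_orderOf_eq_one x) hy hyx) := by
  rw [injective_iff_map_eq_one]
  rintro (i | i) h
  · rw [(pow_val_eq_one_iff hx i).1 h, DihedralGroup.r_zero]
  · have h' : y * x ^ i.val = 1 := h
    rw [eq_inv_of_mul_eq_one_left h'] at hxy
    exact absurd ((Commute.refl x).pow_right _).inv_right hxy

theorem dihedralLift_surjective (hx : x ^ n = 1) (hy : y ^ 2 = 1) (hyx : y * x * y⁻¹ = x⁻¹)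
    (hcov : ∀ g : G, ∃ k : ℕ, g = x ^ k ∨ g = y * x ^ k) :
    Function.Surjective (dihedralLift hx hy hyx) := by
  intro g
  obtain ⟨k, rfl | rfl⟩ := hcov g
  · exact ⟨.r k, pow_val_natCast hx k⟩
  · exact ⟨.sr k, congrArg (y * ·) (pow_val_natCast hx k)⟩

def quaternionLift (hx : x ^ (2 * n) = 1) (hy : y ^ 2 = x ^ n) (hyx : y * x * y⁻¹ = x⁻¹) :
    QuaternionGroup n →* G :=
  MonoidHom.mk'
    (fun
      | .a i => x ^ i.val
      | .xa i => y * x ^ i.val)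
    (by
      rintro (i | i) (j | j)
      · exact pow_val_add hx i j
      · show y * x ^ (j - i).val = x ^ i.val * (y * x ^ j.val)
        rw [pow_val_sub hx, ← mul_assoc, ← mul_assoc, pow_mul_eq_mul_inv_pow hyx]
      · show y * x ^ (i + j).val = y * x ^ i.val * x ^ j.val
        rw [pow_val_add hx, mul_assoc]
      · show x ^ ((n : ZMod (2 * n)) + j - i).val = y * x ^ i.val * (y * x ^ j.val)
        rw [mul_pow_val_mul_mul_pow_val hx hyx, hy, add_sub_assoc, pow_val_add hx,
          pow_val_natCast hx])

theorem quaternionLift_injective (hx : orderOf x = 2 * n) (hy : y ^ 2 = x ^ n)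
    (hyx : y * x * y⁻¹ = x⁻¹) (hxy : ¬Commute x y) :
    Function.Injective (quaternionLift (hx ▸ pow_orderOf_eq_one x) hy hyx) := by
  rw [injective_iff_map_eq_one]
  rintro (i | i) h
  · rw [(pow_val_eq_one_iff hx i).1 h, QuaternionGroup.a_zero]
  · have h' : y * x ^ i.val = 1 := h
    rw [eq_inv_of_mul_eq_one_left h'] at hxy
    exact absurd ((Commute.refl x).pow_right _).inv_right hxy

theorem quaternionLift_surjective (hx : x ^ (2 * n) = 1) (hy : y ^ 2 = x ^ n)
    (hyx : y * x * y⁻¹ = x⁻¹) (hcov : ∀ g : G, ∃ k : ℕ, g = x ^ k ∨ g = y * x ^ k) :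
    Function.Surjective (quaternionLift hx hy hyx) := by
  intro g
  obtain ⟨k, rfl | rfl⟩ := hcov g
  · exact ⟨.a k, pow_val_natCast hx k⟩
  · exact ⟨.xa k, congrArg (y * ·) (pow_val_natCast hx k)⟩

end Lift

theorem nonempty_perm_fin_three_mulEquiv_dihedralGroup_three :
    Nonempty (Equiv.Perm (Fin 3) ≃* DihedralGroup 3) := by
  have hx : orderOf (finRotate 3) = 3 := orderOf_eq_prime (by decide) (by decide)
  have hy : Equiv.swap (0 : Fin 3) 1 ^ 2 = 1 := by decide
  have hyx : Equiv.swap 0 1 * finRotate 3 * (Equiv.swap 0 1)⁻¹ = (finRotate 3)⁻¹ := by decide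
  have hinj := dihedralLift_injective hx hy hyx (by simp only [Commute, SemiconjBy]; decide)
  exact ⟨(MulEquiv.ofBijective _ ((Fintype.bijective_iff_injective_and_card _).2 ⟨hinj, rfl⟩)).symm⟩

section CommGraph

variable {G H : Type*} [Group G] [Group H]

def commGraphCongr (e : G ≃* H) : commGraph G ≃g commGraph H where
  toEquiv := e.toEquiv
  map_rel_iff' {x y} := by
    simp only [commGraph, MulEquiv.toEquiv_eq_coe, EquivLike.coe_coe, ne_eq,
      EmbeddingLike.apply_eq_iff_eq, ← map_mul]
    simp only [← SetLike.mem_coe, coe_center, MulEquivClass.apply_mem_center_iff]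

theorem commGraph_cliqueFree_three_iff :
    (commGraph G).CliqueFree 3 ↔ ∀ x y w : G, (commGraph G).Adj x y → (commGraph G).Adj x w →
      (commGraph G).Adj y w → False := by
  classical
  refine ⟨fun h x y w hxy hxw hyw ↦
    h {x, y, w} (SimpleGraph.is3Clique_triple_iff.2 ⟨hxy, hxw, hyw⟩), ?_⟩
  rintro h s hs
  obtain ⟨x, y, w, hxy, hxw, hyw, -⟩ := SimpleGraph.is3Clique_iff.1 hs
  exact h x y w hxy hxw hyw

instance [Fintype G] [DecidableEq G] : DecidableRel (commGraph G).Adj :=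
  fun x y ↦ inferInstanceAs (Decidable (x ≠ y ∧ _ ∧ _ ∧ _))

theorem mul_mem_center_of_commute (hcf : (commGraph G).CliqueFree 3) {x y : G}
    (hx : x ∉ center G) (hy : y ∉ center G) (hxy : x ≠ y) (h : Commute x y) :
    x * y ∈ center G := by
  by_contra hxy'
  have hx1 : x ≠ 1 := fun h1 ↦ hx (h1 ▸ one_mem _)
  have hy1 : y ≠ 1 := fun h1 ↦ hy (h1 ▸ one_mem _)
  exact commGraph_cliqueFree_three_iff.1 hcf x y (x * y) ⟨hxy, hx, hy, h⟩
    ⟨left_eq_mul.not.2 hy1, hx, hxy', ((Commute.refl x).mul_right h).eq⟩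
    ⟨right_eq_mul.not.2 hx1, hy, hxy', (h.symm.mul_right (Commute.refl y)).eq⟩

theorem eq_of_mem_center (hcf : (commGraph G).CliqueFree 3) {a z w : G} (ha : a ∉ center G)
    (hz : z ∈ center G) (hw : w ∈ center G) (hz1 : z ≠ 1) (hw1 : w ≠ 1) : z = w := by
  by_contra hzw
  have haz : a * z ∉ center G := by rwa [mul_mem_cancel_right hz]
  have haw : a * w ∉ center G := by rwa [mul_mem_cancel_right hw]
  have hcz : Commute a z := mem_center_iff.1 hz a
  have hcw : Commute a w := mem_center_iff.1 hw a
  exact commGraph_cliqueFree_three_iff.1 hcf a (a * z) (a * w)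
    ⟨left_eq_mul.not.2 hz1, ha, haz, ((Commute.refl a).mul_right hcz).eq⟩
    ⟨left_eq_mul.not.2 hw1, ha, haw, ((Commute.refl a).mul_right hcw).eq⟩
    ⟨mul_left_cancel_iff.not.2 hzw, haz, haw,
      (((Commute.refl a).mul_right hcw).mul_left (hcz.symm.mul_right (mem_center_iff.1 hw z))).eq⟩

end CommGraph

def SmallCentralizers (G : Type*) [Group G] : Prop :=
  ∀ x y : G, Commute x y → x = 1 ∨ y = 1 ∨ x = y ∨ x * y = 1

namespace SmallCentralizers

variable {G : Type*} [Group G] {a b s x : G}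

theorem sq_eq_one_or_pow_three_eq_one (hC : SmallCentralizers G) (g : G) :
    g ^ 2 = 1 ∨ g ^ 3 = 1 := by
  rcases hC g (g ^ 2) ((Commute.refl g).pow_right 2) with h | h | h | h
  · simp [h]
  · exact Or.inl h
  · rw [pow_two, left_eq_mul] at h
    simp [h]
  · rw [← pow_succ'] at h
    exact Or.inr h

theorem commute_of_forall_pow_three_eq_one (hC : SmallCentralizers G)
    (h3 : ∀ g : G, g ^ 3 = 1) (a b : G) : Commute a b := by
  have sq_eq_inv : ∀ g : G, g * g = g⁻¹ := fun g ↦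
    eq_inv_of_mul_eq_one_left (by rw [← pow_three']; exact h3 g)
  have hcomm : (a * b) * (b * a) = (b * a) * (a * b) :=
    calc (a * b) * (b * a) = a * (b * b) * a := by group
      _ = (a * b⁻¹) ^ 3 * b * a⁻¹ * b := by rw [sq_eq_inv, pow_three']; group
      _ = (b * a) * (a * b) := by rw [h3, one_mul, ← sq_eq_inv]; group
  rcases hC _ _ hcomm with h | h | h | h
  · rw [eq_inv_of_mul_eq_one_right h]
    exact (Commute.refl a).inv_right
  · rw [eq_inv_of_mul_eq_one_left h]
    exact (Commute.refl a).inv_right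
  · exact h
  · have hb : b = a * a :=
      calc b = a * ((a * b) * (b * a))⁻¹ * a * (b * b * b) := by group
        _ = a * a := by rw [h, ← pow_three', h3]; group
    rw [hb]
    exact (Commute.refl a).mul_right (Commute.refl a)

theorem exists_sq_eq_one (hC : SmallCentralizers G) (hab : ¬Commute a b) :
    ∃ s : G, s ≠ 1 ∧ s ^ 2 = 1 := by
  by_contra! h
  refine hab (hC.commute_of_forall_pow_three_eq_one (fun g ↦ ?_) a b)
  rcases eq_or_ne g 1 with rfl | hg
  · exact one_pow 3
  · exact (hC.sq_eq_one_or_pow_three_eq_one g).resolve_left (h g hg)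

theorem exists_pow_three_eq_one (hC : SmallCentralizers G) (hab : ¬Commute a b) :
    ∃ x : G, x ≠ 1 ∧ x ^ 3 = 1 := by
  by_contra! h
  have sq : ∀ g : G, g ^ 2 = 1 := fun g ↦ by
    rcases eq_or_ne g 1 with rfl | hg
    · exact one_pow 2
    · exact (hC.sq_eq_one_or_pow_three_eq_one g).resolve_right (h g hg)
  exact hab (commute_of_sq_eq_one (sq a) (sq b) (sq (a * b)))

theorem eq_one_or_eq_one_of_commute (hC : SmallCentralizers G) (hs : s ^ 2 = 1)
    (hx : x ^ 3 = 1) (h : Commute s x) : s = 1 ∨ x = 1 := by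
  rcases hC s x h with h | h | rfl | h
  · exact Or.inl h
  · exact Or.inr h
  · exact Or.inr (eq_one_of_sq_eq_one_of_pow_three_eq_one hs hx)
  · refine Or.inr (eq_one_of_sq_eq_one_of_pow_three_eq_one ?_ hx)
    rw [eq_inv_of_mul_eq_one_right h, inv_pow, hs, inv_one]

theorem conj_eq_inv_of_pow_three_eq_one (hC : SmallCentralizers G) (hs1 : s ≠ 1)
    (hs : s ^ 2 = 1) (hx : x ^ 3 = 1) : s * x * s⁻¹ = x⁻¹ := by
  have hsinv : s⁻¹ = s := inv_eq_of_sq_eq_one hs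
  rcases hC.sq_eq_one_or_pow_three_eq_one (s * x) with h | h
  · calc s * x * s⁻¹ = (s * x) ^ 2 * x⁻¹ := by rw [pow_two, hsinv]; group
      _ = x⁻¹ := by rw [h, one_mul]
  -- if `s * x` has order 3, then `s` commutes with its conjugate `x * s * x⁻¹`, forcing `x = 1`
  have hxinv : x⁻¹ = x * x := inv_eq_of_mul_eq_one_right (by rw [← mul_assoc, ← pow_three', hx])
  have hst : s * (x * s * x⁻¹) = x⁻¹ * s * x :=
    calc s * (x * s * x⁻¹) = s * x * s * (x * x) := by rw [← hxinv]; group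
      _ = (s * x) ^ 3 * x⁻¹ * s⁻¹ * x := by rw [pow_three']; group
      _ = x⁻¹ * s * x := by rw [h, one_mul, hsinv]
  have hcomm : Commute s (x * s * x⁻¹) := by
    refine commute_of_sq_eq_one hs (by rw [conj_pow, hs]; group) ?_
    rw [hst, pow_two, show x⁻¹ * s * x * (x⁻¹ * s * x) = x⁻¹ * s ^ 2 * x by rw [pow_two]; group,
      hs]
    group
  have hsx : Commute s x := by
    rcases hC _ _ hcomm with h' | h' | h' | h'
    · exact absurd h' hs1
    · exact absurd (conj_eq_one_iff.1 h') hs1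
    · exact eq_mul_inv_iff_mul_eq.1 h'
    · exact eq_mul_inv_iff_mul_eq.1 (by rw [eq_inv_of_mul_eq_one_right h', hsinv])
  obtain rfl : x = 1 := (hC.eq_one_or_eq_one_of_commute hs hx hsx).resolve_left hs1
  simp

theorem commute_of_pow_three_eq_one (hC : SmallCentralizers G) (hs1 : s ≠ 1) (hs : s ^ 2 = 1)
    (ha : a ^ 3 = 1) (hb : b ^ 3 = 1) : Commute a b := by
  have inv : ∀ {x : G}, x ^ 3 = 1 → s * x * s⁻¹ = x⁻¹ :=
    hC.conj_eq_inv_of_pow_three_eq_one hs1 hs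
  rcases hC.sq_eq_one_or_pow_three_eq_one (a * b) with hab | hab
  · rcases hC.sq_eq_one_or_pow_three_eq_one (a⁻¹ * b) with hab' | hab'
    · have hbab : b * a * b = a⁻¹ := eq_inv_of_mul_eq_one_right (by rw [← hab, pow_two]; group)
      have hbab' : b * a⁻¹ * b = a := ((inv_inv a).symm.trans
        (inv_eq_of_mul_eq_one_right (b := b * a⁻¹ * b) (by rw [← hab', pow_two]; group))).symm
      have ha2 : a ^ 2 = 1 := by
        rw [pow_two, mul_eq_one_iff_eq_inv]
        calc a = b ^ 3 * a * b ^ 3 := by rw [hb]; group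
          _ = b * (b * (b * a * b) * b) * b := by rw [pow_three']; group
          _ = a⁻¹ := by rw [hbab, hbab', hbab]
      rw [eq_one_of_sq_eq_one_of_pow_three_eq_one ha2 ha]
      exact Commute.one_left b
    · exact Commute.inv_left_iff.1 (commute_of_conj_eq_inv (inv (by rw [inv_pow, ha, inv_one]))
        (inv hb) (inv hab'))
  · exact commute_of_conj_eq_inv (inv ha) (inv hb) (inv hab)

theorem exists_pow_eq_of_pow_three_eq_one (hC : SmallCentralizers G) (hs1 : s ≠ 1)
    (hs : s ^ 2 = 1) (ha1 : a ≠ 1) (ha : a ^ 3 = 1) {g : G} (hg : g ^ 3 = 1) :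
    ∃ k : ℕ, g = a ^ k := by
  rcases hC a g (hC.commute_of_pow_three_eq_one hs1 hs ha hg) with h | rfl | rfl | h
  · exact absurd h ha1
  · exact ⟨0, (pow_zero a).symm⟩
  · exact ⟨1, (pow_one _).symm⟩
  · refine ⟨2, ?_⟩
    rw [eq_inv_of_mul_eq_one_right h]
    exact (eq_inv_of_mul_eq_one_left (by rw [← pow_succ, ha])).symm

theorem exists_pow_eq (hC : SmallCentralizers G) (hs1 : s ≠ 1) (hs : s ^ 2 = 1) (ha1 : a ≠ 1)
    (ha : a ^ 3 = 1) (g : G) : ∃ k : ℕ, g = a ^ k ∨ g = s * a ^ k := by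
  rcases hC.sq_eq_one_or_pow_three_eq_one g with hg | hg
  · rcases hC.sq_eq_one_or_pow_three_eq_one (s * g) with hsg | hsg
    · refine ⟨0, ?_⟩
      rcases hC s g (commute_of_sq_eq_one hs hg hsg) with h | rfl | rfl | h
      · exact absurd h hs1
      · simp
      · simp
      · simp [eq_inv_of_mul_eq_one_right h, inv_eq_of_sq_eq_one hs]
    · obtain ⟨k, hk⟩ := hC.exists_pow_eq_of_pow_three_eq_one hs1 hs ha1 ha hsg
      exact ⟨k, Or.inr (by rw [← hk, ← mul_assoc, ← pow_two, hs, one_mul])⟩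
  · obtain ⟨k, hk⟩ := hC.exists_pow_eq_of_pow_three_eq_one hs1 hs ha1 ha hg
    exact ⟨k, Or.inl hk⟩

theorem nonempty_mulEquiv_dihedralGroup_three (hC : SmallCentralizers G) (hab : ¬Commute a b) :
    Nonempty (G ≃* DihedralGroup 3) := by
  obtain ⟨s, hs1, hs⟩ := hC.exists_sq_eq_one hab
  obtain ⟨x, hx1, hx⟩ := hC.exists_pow_three_eq_one hab
  have hsx := hC.conj_eq_inv_of_pow_three_eq_one hs1 hs hx
  have hxs : ¬Commute x s := fun h ↦ (hC.eq_one_or_eq_one_of_commute hs hx h.symm).elim hs1 hx1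
  exact ⟨(MulEquiv.ofBijective _ ⟨dihedralLift_injective (orderOf_eq_prime hx hx1) hs hsx hxs,
    dihedralLift_surjective hx hs hsx (hC.exists_pow_eq hs1 hs hx1 hx)⟩).symm⟩

end SmallCentralizers

theorem smallCentralizers_of_cliqueFree {G : Type*} [Group G] (hcf : (commGraph G).CliqueFree 3)
    (hZ : center G = ⊥) : SmallCentralizers G := by
  intro x y h
  by_contra! hne
  obtain ⟨hx, hy, hxy, hxy1⟩ := hne
  refine hxy1 ?_
  simpa [hZ] using mul_mem_center_of_commute hcf (by simpa [hZ]) (by simpa [hZ]) hxy h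

section NontrivialCenter

variable {G : Type*} [Group G] {a b x y z : G}

theorem eq_one_or_eq_of_mem_center (hcf : (commGraph G).CliqueFree 3) (hz : z ∈ center G)
    (hz1 : z ≠ 1) (ha : a ∉ center G) {c : G} (hc : c ∈ center G) : c = 1 ∨ c = z :=
  or_iff_not_imp_left.2 fun hc1 ↦ eq_of_mem_center hcf ha hc hz hc1 hz1

theorem sq_eq_one_of_mem_center (hcf : (commGraph G).CliqueFree 3) (hz : z ∈ center G)
    (hz1 : z ≠ 1) (ha : a ∉ center G) : z ^ 2 = 1 :=
  (eq_one_or_eq_of_mem_center hcf hz hz1 ha (pow_mem hz 2)).resolve_right fun h ↦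
    hz1 (by rwa [pow_two, mul_eq_left] at h)

theorem sq_mem_center (hcf : (commGraph G).CliqueFree 3) (hz : z ∈ center G) (hz1 : z ≠ 1)
    (g : G) : g ^ 2 ∈ center G := by
  by_cases hg : g ∈ center G
  · exact pow_mem hg 2
  have hgz : g * z ∉ center G := by rwa [mul_mem_cancel_right hz]
  have := mul_mem_center_of_commute hcf hg hgz (left_eq_mul.not.2 hz1)
    ((Commute.refl g).mul_right (mem_center_iff.1 hz g))
  rwa [← mul_assoc, mul_mem_cancel_right hz, ← pow_two] at this

theorem commutatorElement_eq (hcf : (commGraph G).CliqueFree 3) (hz : z ∈ center G)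
    (hz1 : z ≠ 1) (hxy : ¬Commute x y) : ⁅x, y⁆ = z := by
  have hx : x ∉ center G := fun h ↦ hxy (mem_center_iff.1 h y).symm
  refine (eq_one_or_eq_of_mem_center hcf hz hz1 hx
    (commutatorElement_mem_center (sq_mem_center hcf hz hz1) x y)).resolve_left ?_
  rwa [commutatorElement_eq_one_iff_commute]

theorem exists_mem_center_eq_or_eq_mul (hcf : (commGraph G).CliqueFree 3) (hz : z ∈ center G)
    (hz1 : z ≠ 1) {g u : G} (hu : u ∉ center G) (h : Commute g u) :
    ∃ c ∈ center G, g = c ∨ g = u * c := by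
  by_cases hg : g ∈ center G
  · exact ⟨g, hg, Or.inl rfl⟩
  by_cases hgu : g = u
  · exact ⟨1, one_mem _, Or.inr (by rw [hgu, mul_one])⟩
  refine ⟨u⁻¹ * g, ?_, Or.inr (by group)⟩
  have : u⁻¹ * g = (u ^ 2)⁻¹ * (g * u) := by rw [h.eq, pow_two]; group
  rw [this]
  exact mul_mem (inv_mem (sq_mem_center hcf hz hz1 u)) (mul_mem_center_of_commute hcf hg hu hgu h)

theorem exists_mem_center_eq (hcf : (commGraph G).CliqueFree 3) (hz : z ∈ center G)
    (hz1 : z ≠ 1) {u v : G} (huv : ¬Commute u v) (g : G) :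
    ∃ c ∈ center G, g = c ∨ g = u * c ∨ g = v * c ∨ g = u * v * c := by
  have hu : u ∉ center G := fun h ↦ huv (mem_center_iff.1 h v).symm
  have hv : v ∉ center G := fun h ↦ huv (mem_center_iff.1 h u)
  by_cases hgu : Commute g u
  · obtain ⟨c, hc, h | h⟩ := exists_mem_center_eq_or_eq_mul hcf hz hz1 hu hgu
    exacts [⟨c, hc, Or.inl h⟩, ⟨c, hc, Or.inr (Or.inl h)⟩]
  by_cases hgv : Commute g v
  · obtain ⟨c, hc, h | h⟩ := exists_mem_center_eq_or_eq_mul hcf hz hz1 hv hgv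
    exacts [⟨c, hc, Or.inl h⟩, ⟨c, hc, Or.inr (Or.inr (Or.inl h))⟩]
  have huv' : u * v ∉ center G := fun h ↦
    huv (mul_left_cancel (((mem_center_iff.1 h u).trans (mul_assoc u v u)) :
      u * (u * v) = u * (v * u)))
  -- `⁅g, u⁆ = ⁅g, v⁆ = z` and `z ^ 2 = 1`, so `⁅g, u * v⁆ = 1`
  have hguv : Commute g (u * v) := by
    rw [← commutatorElement_eq_one_iff_commute,
      show ⁅g, u * v⁆ = ⁅g, u⁆ * (u * ⁅g, v⁆ * u⁻¹) by simp only [commutatorElement_def]; group,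
      commutatorElement_eq hcf hz hz1 hgu, commutatorElement_eq hcf hz hz1 hgv,
      mem_center_iff.1 hz u, mul_inv_cancel_right, ← pow_two,
      sq_eq_one_of_mem_center hcf hz hz1 hu]
  obtain ⟨c, hc, h | h⟩ := exists_mem_center_eq_or_eq_mul hcf hz hz1 huv' hguv
  exacts [⟨c, hc, Or.inl h⟩, ⟨c, hc, Or.inr (Or.inr (Or.inr h))⟩]

theorem exists_not_commute_sq_eq (hcf : (commGraph G).CliqueFree 3) (hz : z ∈ center G)
    (hz1 : z ≠ 1) (hab : ¬Commute a b) : ∃ x y : G, ¬Commute x y ∧ x ^ 2 = z := by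
  have ha : a ∉ center G := fun h ↦ hab (mem_center_iff.1 h b).symm
  have sq : ∀ g : G, g ^ 2 = 1 ∨ g ^ 2 = z := fun g ↦
    eq_one_or_eq_of_mem_center hcf hz hz1 ha (sq_mem_center hcf hz hz1 g)
  rcases sq a with ha2 | ha2
  swap
  · exact ⟨a, b, hab, ha2⟩
  rcases sq b with hb2 | hb2
  swap
  · exact ⟨b, a, fun h ↦ hab h.symm, hb2⟩
  -- both `a` and `b` are involutions, so `(a * b) ^ 2 = ⁅a, b⁆`
  refine ⟨a * b, a, fun h ↦ hab ?_, ?_⟩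
  · exact (mul_left_cancel ((mul_assoc a b a).symm.trans h)).symm
  · rw [← commutatorElement_eq hcf hz hz1 hab, commutatorElement_def, inv_eq_of_sq_eq_one ha2,
      inv_eq_of_sq_eq_one hb2, pow_two, ← mul_assoc]

theorem exists_pow_eq_of_sq_eq (hcf : (commGraph G).CliqueFree 3) (hz : z ∈ center G)
    (hz1 : z ≠ 1) (hxy : ¬Commute x y) (hx : x ^ 2 = z) (g : G) :
    ∃ k : ℕ, g = x ^ k ∨ g = y * x ^ k := by
  have hx' : x ∉ center G := fun h ↦ hxy (mem_center_iff.1 h y).symm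
  obtain ⟨c, hc, h⟩ := exists_mem_center_eq hcf hz hz1 (u := y) (v := x) (fun h ↦ hxy h.symm) g
  obtain ⟨m, rfl⟩ : ∃ m : ℕ, c = x ^ m :=
    (eq_one_or_eq_of_mem_center hcf hz hz1 hx' hc).elim (fun h ↦ ⟨0, h.trans (pow_zero x).symm⟩)
      fun h ↦ ⟨2, h.trans hx.symm⟩
  rcases h with h | h | h | h
  · exact ⟨m, Or.inl h⟩
  · exact ⟨m, Or.inr h⟩
  · exact ⟨m + 1, Or.inl (by rw [h, pow_succ'])⟩
  · exact ⟨m + 1, Or.inr (by rw [h, pow_succ', mul_assoc])⟩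

theorem nonempty_mulEquiv_quaternionGroup_or_dihedralGroup (hcf : (commGraph G).CliqueFree 3)
    (hz : z ∈ center G) (hz1 : z ≠ 1) (hab : ¬Commute a b) :
    Nonempty (G ≃* QuaternionGroup 2) ∨ Nonempty (G ≃* DihedralGroup 4) := by
  obtain ⟨x, y, hxy, hx⟩ := exists_not_commute_sq_eq hcf hz hz1 hab
  have hx' : x ∉ center G := fun h ↦ hxy (mem_center_iff.1 h y).symm
  have hy : y ∉ center G := fun h ↦ hxy (mem_center_iff.1 h x)
  have hx4 : x ^ 4 = 1 := by
    rw [show 4 = 2 * 2 from rfl, pow_mul, hx, sq_eq_one_of_mem_center hcf hz hz1 hx']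
  have hxo : orderOf x = 4 :=
    orderOf_eq_prime_pow (p := 2) (n := 1) (by rw [pow_one, hx]; exact hz1) hx4
  have hyx : y * x * y⁻¹ = x⁻¹ := by
    have hc : y * x * y⁻¹ * x⁻¹ = x ^ 2 := by
      rw [← commutatorElement_def, hx, commutatorElement_eq hcf hz hz1 fun h ↦ hxy h.symm]
    calc y * x * y⁻¹ = y * x * y⁻¹ * x⁻¹ * x := by group
      _ = x⁻¹ := by
        rw [hc]
        exact eq_inv_of_mul_eq_one_left (by rw [← pow_succ, ← pow_succ]; exact hx4)
  have hcov := exists_pow_eq_of_sq_eq hcf hz hz1 hxy hx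
  rcases eq_one_or_eq_of_mem_center hcf hz hz1 hy (sq_mem_center hcf hz hz1 y) with hy2 | hy2
  · exact Or.inr ⟨(MulEquiv.ofBijective _ ⟨dihedralLift_injective hxo hy2 hyx hxy,
      dihedralLift_surjective hx4 hy2 hyx hcov⟩).symm⟩
  · have hy2' : y ^ 2 = x ^ 2 := hy2.trans hx.symm
    exact Or.inl ⟨(MulEquiv.ofBijective _ ⟨quaternionLift_injective hxo hy2' hyx hxy,
      quaternionLift_surjective hx4 hy2' hyx hcov⟩).symm⟩

end NontrivialCenter

theorem perm_fin_three_commGraph_cliqueFree : (commGraph (Equiv.Perm (Fin 3))).CliqueFree 3 :=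
  commGraph_cliqueFree_three_iff.2 (by decide)

theorem quaternionGroup_two_commGraph_cliqueFree : (commGraph (QuaternionGroup 2)).CliqueFree 3 :=
  commGraph_cliqueFree_three_iff.2 (by decide)

theorem dihedralGroup_four_commGraph_cliqueFree : (commGraph (DihedralGroup 4)).CliqueFree 3 :=
  commGraph_cliqueFree_three_iff.2 (by decide)

/-- The commuting graph of a non-abelian group has no 3-cycle iff the group is
isomorphic to S₃, Q₈ or D₈. -/
theorem stmt_0 (G : Type*) [Group G] (hG : ∃ a b : G, a * b ≠ b * a) :
    (commGraph G).CliqueFree 3 ↔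
      (Nonempty (G ≃* Equiv.Perm (Fin 3)) ∨ Nonempty (G ≃* QuaternionGroup 2) ∨
        Nonempty (G ≃* DihedralGroup 4)) := by
  obtain ⟨a, b, hab⟩ := hG
  constructor
  · intro hcf
    by_cases hZ : center G = ⊥
    · obtain ⟨e⟩ :=
        (smallCentralizers_of_cliqueFree hcf hZ).nonempty_mulEquiv_dihedralGroup_three hab
      obtain ⟨d⟩ := nonempty_perm_fin_three_mulEquiv_dihedralGroup_three
      exact Or.inl ⟨e.trans d.symm⟩
    · obtain ⟨⟨z, hz⟩, hz1⟩ := ne_bot_iff_exists_ne_one.1 hZ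
      exact Or.inr (nonempty_mulEquiv_quaternionGroup_or_dihedralGroup hcf hz
        (fun h ↦ hz1 (Subtype.ext h)) hab)
  · rintro (⟨⟨e⟩⟩ | ⟨⟨e⟩⟩ | ⟨⟨e⟩⟩)
    · exact perm_fin_three_commGraph_cliqueFree.comap (commGraphCongr e).isContained
    · exact quaternionGroup_two_commGraph_cliqueFree.comap (commGraphCongr e).isContained
    · exact dihedralGroup_four_commGraph_cliqueFree.comap (commGraphCongr e).isContained
end

section
/- The girth of the commuting graph of a non-abelian group is either 3 or infinite (i.e., if the commuting graph contains any cycle, it contains a triangle). -/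
/-! A cycle contains a path `x - y - z` with `x ≠ z`. In the commuting graph such a path closes
to the triangle `x, y, z` when `x` and `z` commute, and otherwise `y * x` is non-central (else `z`
would commute with `y⁻¹ * (y * x) = x`), so `x, y, y * x` is a triangle. -/

namespace SimpleGraph

variable {V : Type*} {G : SimpleGraph V}

lemma egirth_eq_three_of_adj {a b c : V} (hab : G.Adj a b) (hac : G.Adj a c) (hbc : G.Adj b c) :
    G.egirth = 3 := by
  classical
  obtain ⟨u, w, hw, hlen⟩ := is3Clique_iff_exists_cycle_length_three.mp
    ⟨_, is3Clique_triple_iff.mpr ⟨hab, hac, hbc⟩⟩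
  refine le_antisymm ?_ three_le_egirth
  simpa [hlen] using egirth_le_length hw

lemma exists_adj_adj_ne_of_not_isAcyclic (hG : ¬G.IsAcyclic) :
    ∃ x y z, G.Adj x y ∧ G.Adj y z ∧ x ≠ z := by
  obtain ⟨u, w, hw⟩ : ∃ u, ∃ w : G.Walk u u, w.IsCycle := by
    simpa [IsAcyclic] using hG
  exact ⟨_, u, _, w.adj_penultimate hw.not_nil, w.adj_snd hw.not_nil,
    hw.snd_ne_penultimate.symm⟩

end SimpleGraph

namespace Subgroup

variable {G : Type*} [Group G]

lemma mul_notMem_center_of_commute {x y z : G} (hyz : Commute y z) (hxz : ¬Commute x z) :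
    y * x ∉ center G := by
  intro hyx
  have hx : x = y⁻¹ * (y * x) := by group
  exact hxz (hx ▸ hyz.inv_left.mul_left ((mem_center_iff.mp hyx z).symm))

end Subgroup

lemma commGraph_egirth_eq_three_of_adj_adj {G : Type*} [Group G] {x y z : G}
    (hxy : (commGraph G).Adj x y) (hyz : (commGraph G).Adj y z) (hxz : x ≠ z) :
    (commGraph G).egirth = 3 := by
  obtain ⟨hxy, hx, hy, hcxy⟩ := hxy
  obtain ⟨hyz, -, hz, hcyz⟩ := hyz
  by_cases hcxz : x * z = z * x
  · exact SimpleGraph.egirth_eq_three_of_adj ⟨hxy, hx, hy, hcxy⟩ ⟨hxz, hx, hz, hcxz⟩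
      ⟨hyz, hy, hz, hcyz⟩
  have hyx_noncentral := Subgroup.mul_notMem_center_of_commute hcyz hcxz
  have hyx_ne_x : y * x ≠ x := fun h ↦ hy (mul_eq_right.mp h ▸ one_mem _)
  have hyx_ne_y : y * x ≠ y := fun h ↦ hx (mul_eq_left.mp h ▸ one_mem _)
  exact SimpleGraph.egirth_eq_three_of_adj ⟨hxy, hx, hy, hcxy⟩
    ⟨hyx_ne_x.symm, hx, hyx_noncentral, Commute.mul_right hcxy (Commute.refl x)⟩
    ⟨hyx_ne_y.symm, hy, hyx_noncentral, (Commute.refl y).mul_right hcxy.symm⟩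

theorem stmt_3_general (G : Type*) [Group G] :
    (commGraph G).egirth = 3 ∨ (commGraph G).egirth = ⊤ := by
  by_cases hG : (commGraph G).IsAcyclic
  · exact Or.inr (SimpleGraph.egirth_eq_top.mpr hG)
  obtain ⟨x, y, z, hxy, hyz, hxz⟩ := SimpleGraph.exists_adj_adj_ne_of_not_isAcyclic hG
  exact Or.inl (commGraph_egirth_eq_three_of_adj_adj hxy hyz hxz)

/-- The girth of the commuting graph of a non-abelian group is 3 or infinite. -/
theorem stmt_3 (G : Type*) [Group G] (hG : ∃ a b : G, a * b ≠ b * a) :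
    (commGraph G).egirth = 3 ∨ (commGraph G).egirth = ⊤ :=
  stmt_3_general G
end

section
/- Let G be a non-abelian group of order 16 with |Z(G)| = 4. Then G is an AC-group, i.e., the centralizer of every non-central element of G is abelian, and moreover for each non-central x, C_G(x) = ⟨x⟩Z(G) and |C_G(x)| = 8. -/
/-!
The subgroup `⟨x⟩Z(G)` is abelian and lies in `C_G(x)`. For non-central `x` the chain
`Z(G) < ⟨x⟩Z(G) ≤ C_G(x) < G` has both ends strict, and a proper subgroup has at most half the
order of the group containing it, so `8 ≤ |⟨x⟩Z(G)| ≤ |C_G(x)| ≤ 8`. Hence `C_G(x) = ⟨x⟩Z(G)`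
has order 8 and is abelian.
-/

namespace Subgroup

variable {G : Type*} [Group G]

theorem two_mul_card_le_card_of_lt {H K : Subgroup G} [Finite K] (h : H < K) :
    2 * Nat.card H ≤ Nat.card K := by
  obtain ⟨m, hm⟩ := card_dvd_of_le h.le
  have hm0 : m ≠ 0 := by
    rintro rfl
    exact Nat.card_pos.ne' (by simpa using hm)
  have hm1 : m ≠ 1 := by
    rintro rfl
    exact h.ne (eq_of_le_of_card_ge h.le (by rw [hm, mul_one]))
  rw [hm, mul_comm]
  exact Nat.mul_le_mul_left _ (show 2 ≤ m by omega)

theorem closure_singleton_sup_center_le_centralizer {x a : G} (ha : a ∈ centralizer {x}) :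
    closure {x} ⊔ center G ≤ centralizer {a} := by
  refine sup_le ?_ (center_le_centralizer _)
  rw [closure_le, Set.singleton_subset_iff, SetLike.mem_coe, mem_centralizer_singleton_iff]
  exact (mem_centralizer_singleton_iff.1 ha).symm

theorem centralizer_singleton_ne_top {x : G} (hx : x ∉ center G) : centralizer {x} ≠ ⊤ :=
  fun h => hx (Set.singleton_subset_iff.1 (centralizer_eq_top_iff_subset.1 h))

end Subgroup

open Subgroup

theorem stmt_10_general (G : Type*) [Group G] (hcard : Nat.card G = 16)
    (hZ : Nat.card (Subgroup.center G) = 4) :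
    ∀ x : G, x ∉ Subgroup.center G →
      (∀ a ∈ Subgroup.centralizer {x}, ∀ b ∈ Subgroup.centralizer {x}, a * b = b * a) ∧
      Subgroup.centralizer {x} = Subgroup.closure {x} ⊔ Subgroup.center G ∧
      Nat.card (Subgroup.centralizer ({x} : Set G)) = 8 := by
  have : Finite G := Nat.finite_of_card_ne_zero (by omega)
  intro x hx
  have hKC : closure {x} ⊔ center G ≤ centralizer {x} :=
    closure_singleton_sup_center_le_centralizer (mem_centralizer_singleton_iff.2 rfl)
  have hZK : center G < closure {x} ⊔ center G :=
    lt_of_le_of_ne le_sup_right fun h => hx (h ▸ mem_sup_left (subset_closure rfl))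
  have hCG : centralizer {x} < ⊤ := lt_top_iff_ne_top.2 (centralizer_singleton_ne_top hx)
  have hZK_card := two_mul_card_le_card_of_lt hZK
  have hCG_card := two_mul_card_le_card_of_lt hCG
  have hKC_card := card_le_of_le hKC
  rw [card_top, hcard] at hCG_card
  have hC : Nat.card (centralizer {x}) = 8 := by omega
  have hCK : centralizer {x} = closure {x} ⊔ center G :=
    (eq_of_le_of_card_ge hKC (by omega)).symm
  refine ⟨fun a ha b hb => ?_, hCK, hC⟩
  have hab := closure_singleton_sup_center_le_centralizer ha (hCK ▸ hb)
  exact (mem_centralizer_singleton_iff.1 hab).symm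

/-- A non-abelian group of order 16 with center of order 4 is an AC-group; moreover the
centralizer of every non-central element x equals ⟨x⟩Z(G) and has order 8. -/
theorem stmt_10 (G : Type*) [Group G] (hcard : Nat.card G = 16)
    (hZ : Nat.card (Subgroup.center G) = 4) (hG : ∃ a b : G, a * b ≠ b * a) :
    ∀ x : G, x ∉ Subgroup.center G →
      (∀ a ∈ Subgroup.centralizer {x}, ∀ b ∈ Subgroup.centralizer {x}, a * b = b * a) ∧
      Subgroup.centralizer {x} = Subgroup.closure {x} ⊔ Subgroup.center G ∧
      Nat.card (Subgroup.centralizer ({x} : Set G)) = 8 :=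
  stmt_10_general G hcard hZ
end
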